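/- arXiv:2307.07082 — 7 statements merged into one kernel-verified Lean document; each statement's English description precedes it below -/
import Mathlib

section
/- Let V be a finite-dimensional vector space over ℚ equipped with an alternating bilinear form ⟨·,·⟩. Let v_1, v_2, v_3 ∈ V be elements whose images under the adjoint map V → Hom(V,ℚ), v ↦ ⟨v,·⟩, are linearly independent. Then the natural map ⨁_{i=1}^{3} Λ²(v_i^⊥) → Λ²V induced by the inclusions v_i^⊥ ⊆ V is surjective. -/
set_option maxHeartbeats 1000000

open ExteriorAlgebra

private lemma stmt1_mem_summand {V : Type*} [AddCommGroup V] [Module ℚ V] (H : Submodule ℚ V)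
    {x y : V} (hx : x ∈ H) (hy : y ∈ H) :
    ι ℚ x * ι ℚ y ∈ Submodule.map (ExteriorAlgebra.map H.subtype).toLinearMap (⋀[ℚ]^2 ↥H) := by
  refine ⟨ι ℚ (⟨x, hx⟩ : H) * ι ℚ (⟨y, hy⟩ : H), ?_, ?_⟩
  · have : ι ℚ (⟨x, hx⟩ : H) * ι ℚ (⟨y, hy⟩ : H) ∈
        LinearMap.range (ι ℚ : H →ₗ[ℚ] ExteriorAlgebra ℚ H) *
        LinearMap.range (ι ℚ : H →ₗ[ℚ] ExteriorAlgebra ℚ H) :=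
      Submodule.mul_mem_mul (LinearMap.mem_range_self _ _) (LinearMap.mem_range_self _ _)
    simpa [exteriorPower, pow_two] using this
  · simp [map_mul, map_apply_ι]

/-- If `v₁, v₂, v₃` have linearly independent adjoints for an alternating
bilinear form on a finite-dimensional `ℚ`-vector space `V`, then the natural map
`⨁ᵢ Λ²(vᵢ^⊥) → Λ²V` is surjective, i.e. the images of the `Λ²(vᵢ^⊥)` span `Λ²V`. -/
theorem stmt_1 (V : Type*) [AddCommGroup V] [Module ℚ V] [FiniteDimensional ℚ V]
    (B : V →ₗ[ℚ] V →ₗ[ℚ] ℚ) (hB : ∀ x, B x x = 0)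
    (v : Fin 3 → V) (hv : LinearIndependent ℚ (fun i => B (v i))) :
    ⨆ i : Fin 3,
        Submodule.map (ExteriorAlgebra.map (LinearMap.ker (B (v i))).subtype).toLinearMap
          (⋀[ℚ]^2 ↥(LinearMap.ker (B (v i)))) = ⋀[ℚ]^2 V := by
  classical
  set S := ⨆ i : Fin 3,
      Submodule.map (ExteriorAlgebra.map (LinearMap.ker (B (v i))).subtype).toLinearMap
        (⋀[ℚ]^2 ↥(LinearMap.ker (B (v i)))) with hS
  -- a family dual to the functionals `B (v i)`
  obtain ⟨u, hu⟩ : ∃ u : Fin 3 → V, ∀ i j, B (v i) (u j) = if i = j then 1 else 0 := by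
    have hexists : ∀ i : Fin 3, ∃ w : V, B (v i) w ≠ 0 ∧ ∀ j, j ≠ i → B (v j) w = 0 := by
      intro i
      have h1 : B (v i) ∉ Submodule.span ℚ ((fun i => B (v i)) '' {i}ᶜ) :=
        hv.notMem_span_image (by simp)
      obtain ⟨φ, hφ1, hφ2⟩ := Submodule.exists_dual_map_eq_bot_of_notMem h1 inferInstance
      refine ⟨(Module.evalEquiv ℚ V).symm φ, ?_, ?_⟩
      · rwa [Module.apply_evalEquiv_symm_apply]
      · intro j hj
        rw [Module.apply_evalEquiv_symm_apply]
        have hmem : B (v j) ∈ Submodule.span ℚ ((fun i => B (v i)) '' {i}ᶜ) :=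
          Submodule.subset_span ⟨j, by simp [hj], rfl⟩
        have := Submodule.mem_map_of_mem (f := φ) hmem
        rw [hφ2] at this
        exact Submodule.mem_bot _ |>.mp this
    choose w hw1 hw2 using hexists
    refine ⟨fun i => (B (v i) (w i))⁻¹ • w i, fun i j => ?_⟩
    rcases eq_or_ne i j with rfl | h
    · simp [inv_mul_cancel₀ (hw1 i)]
    · simp [hw2 j i h, h]
  -- a product `ι p * ι q` with `p, q ∈ ker (B (v k))` lies in `S`
  have key : ∀ (k : Fin 3) (p q : V), B (v k) p = 0 → B (v k) q = 0 → ι ℚ p * ι ℚ q ∈ S := by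
    intro k p q hp hq
    exact Submodule.mem_iSup_of_mem k
      (stmt1_mem_summand _ (LinearMap.mem_ker.mpr hp) (LinearMap.mem_ker.mpr hq))
  refine le_antisymm (iSup_le fun i => ?_) ?_
  · -- each summand is contained in `⋀^2 V`
    set H := LinearMap.ker (B (v i))
    have h1 : (LinearMap.range (ι ℚ : H →ₗ[ℚ] ExteriorAlgebra ℚ H)).map
        (ExteriorAlgebra.map H.subtype).toLinearMap ≤
        LinearMap.range (ι ℚ : V →ₗ[ℚ] ExteriorAlgebra ℚ V) := by
      rintro _ ⟨_, ⟨m, rfl⟩, rfl⟩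
      exact ⟨H.subtype m, (map_apply_ι _ _).symm⟩
    calc Submodule.map (ExteriorAlgebra.map H.subtype).toLinearMap (⋀[ℚ]^2 ↥H)
        = (LinearMap.range (ι ℚ : H →ₗ[ℚ] ExteriorAlgebra ℚ H)).map
            (ExteriorAlgebra.map H.subtype).toLinearMap *
          (LinearMap.range (ι ℚ : H →ₗ[ℚ] ExteriorAlgebra ℚ H)).map
            (ExteriorAlgebra.map H.subtype).toLinearMap := by
          rw [exteriorPower, pow_two, Submodule.map_mul]
      _ ≤ _ := by
          rw [exteriorPower, pow_two]
          exact mul_le_mul' h1 h1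
  · -- `⋀^2 V ≤ S`
    rw [exteriorPower, pow_two]
    refine Submodule.mul_le.mpr ?_
    rintro _ ⟨x, rfl⟩ _ ⟨y, rfl⟩
    -- decompose x and y
    set x₀ := x - (B (v 0) x • u 0 + B (v 1) x • u 1 + B (v 2) x • u 2) with hx₀
    set y₀ := y - (B (v 0) y • u 0 + B (v 1) y • u 1 + B (v 2) y • u 2) with hy₀
    have hx0 : ∀ j, B (v j) x₀ = 0 := by
      intro j
      fin_cases j <;> simp [hx₀, hu, map_sub, map_add, map_smul]
    have hy0 : ∀ j, B (v j) y₀ = 0 := by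
      intro j
      fin_cases j <;> simp [hy₀, hu, map_sub, map_add, map_smul]
    have hx : x = x₀ + (B (v 0) x • u 0 + B (v 1) x • u 1 + B (v 2) x • u 2) := by
      rw [hx₀]; abel
    have hy : y = y₀ + (B (v 0) y • u 0 + B (v 1) y • u 1 + B (v 2) y • u 2) := by
      rw [hy₀]; abel
    rw [hx, hy]
    simp only [map_add, map_smul, add_mul, mul_add, smul_mul_assoc, mul_smul_comm]
    have huu : ∀ i j k : Fin 3, k ≠ i → k ≠ j → ι ℚ (u i) * ι ℚ (u j) ∈ S := by
      intro i j k hki hkj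
      exact key k _ _ (by simp [hu, hki]) (by simp [hu, hkj])
    have hxu : ∀ i k : Fin 3, k ≠ i → ι ℚ x₀ * ι ℚ (u i) ∈ S := by
      intro i k hki
      exact key k _ _ (hx0 k) (by simp [hu, hki])
    have hyu : ∀ i k : Fin 3, k ≠ i → ι ℚ (u i) * ι ℚ y₀ ∈ S := by
      intro i k hki
      exact key k _ _ (by simp [hu, hki]) (hy0 k)
    have hsq : ∀ i : Fin 3, ι ℚ (u i) * ι ℚ (u i) ∈ S := by
      intro i; rw [ι_sq_zero]; exact Submodule.zero_mem S
    repeat' first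
      | apply Submodule.add_mem
      | apply Submodule.smul_mem
    all_goals first
      | exact key 0 _ _ (hx0 0) (hy0 0)
      | exact hsq 0 | exact hsq 1 | exact hsq 2
      | exact hxu 0 1 (by decide) | exact hxu 1 0 (by decide) | exact hxu 2 0 (by decide)
      | exact hyu 0 1 (by decide) | exact hyu 1 0 (by decide) | exact hyu 2 0 (by decide)
      | exact huu 0 1 2 (by decide) (by decide) | exact huu 1 0 2 (by decide) (by decide)
      | exact huu 0 2 1 (by decide) (by decide) | exact huu 2 0 1 (by decide) (by decide)
      | exact huu 1 2 0 (by decide) (by decide) | exact huu 2 1 0 (by decide) (by decide)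
end

section
/- Let V be a finite-dimensional ℚ-vector space with an alternating bilinear form, and let 𝒱 = {v_1,...,v_n} ⊆ V with n ≥ 3 be a set whose image under the adjoint map V → Hom(V,ℚ) is linearly independent. Let m ≤ n − 2 be a natural number. Then the natural map ⨁_{𝒱'⊆𝒱, |𝒱'|=m} Λ²((𝒱')^⊥) → Λ²V is surjective, where (𝒱')^⊥ is the common perpendicular of all elements of 𝒱'. -/
open ExteriorAlgebra

private lemma ιMulti_two' {R M : Type*} [CommRing R] [AddCommGroup M] [Module R M]
    (z : Fin 2 → M) :
    ExteriorAlgebra.ιMulti R 2 z = ExteriorAlgebra.ι R (z 0) * ExteriorAlgebra.ι R (z 1) := by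
  simp [ExteriorAlgebra.ιMulti_apply, List.ofFn_succ, Matrix.vecTail, Function.comp]

private lemma mul_mem_exteriorPower_two {R M : Type*} [CommRing R] [AddCommGroup M] [Module R M]
    (a b : M) : ExteriorAlgebra.ι R a * ExteriorAlgebra.ι R b ∈ ⋀[R]^2 M := by
  have h := ExteriorAlgebra.ιMulti_range R 2 (Set.mem_range_self ![a, b])
  rw [ιMulti_two'] at h
  simpa using h

set_option maxHeartbeats 1000000 in
set_option synthInstance.maxHeartbeats 400000 in
/-- If `𝒱 = {v₁, …, vₙ}` (`n ≥ 3`) has linearly independent adjoints for an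
alternating bilinear form on a finite-dimensional `ℚ`-vector space `V`, and `m ≤ n − 2`, then
the natural map `⨁_{𝒱' ⊆ 𝒱, |𝒱'| = m} Λ²((𝒱')^⊥) → Λ²V` is surjective, i.e. the images of
the subspaces `Λ²((𝒱')^⊥)` over all `m`-element subsets `𝒱'` span `Λ²V`. -/
theorem stmt_2 (V : Type*) [AddCommGroup V] [Module ℚ V] [FiniteDimensional ℚ V]
    (B : V →ₗ[ℚ] V →ₗ[ℚ] ℚ) (hB : ∀ x, B x x = 0)
    (n : ℕ) (hn : 3 ≤ n) (v : Fin n → V)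
    (hv : LinearIndependent ℚ (fun i => B (v i)))
    (m : ℕ) (hm : m ≤ n - 2) :
    ⨆ (S : Finset (Fin n)) (_ : S.card = m),
        Submodule.map
          (ExteriorAlgebra.map (⨅ i ∈ S, LinearMap.ker (B (v i))).subtype).toLinearMap
          (⋀[ℚ]^2 ↥(⨅ i ∈ S, LinearMap.ker (B (v i)))) = ⋀[ℚ]^2 V := by
  classical
  -- surjectivity of the evaluation map V → ℚ^n
  have hsurj : Function.Surjective
      (LinearMap.pi (fun i => B (v i)) : V →ₗ[ℚ] (Fin n → ℚ)) := by
    rw [← LinearMap.dualMap_injective_iff]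
    refine (injective_iff_map_eq_zero _).2 fun g hg => ?_
    have hc : ∀ w : Fin n → ℚ, g w = ∑ i, w i * g (Pi.single i (1 : ℚ)) := by
      intro w
      conv_lhs => rw [← Finset.univ_sum_single w]
      rw [map_sum]
      refine Finset.sum_congr rfl fun i _ => ?_
      have hsingle : (Pi.single i (w i) : Fin n → ℚ) = w i • (Pi.single i (1 : ℚ) : Fin n → ℚ) := by
        rw [← Pi.single_smul, smul_eq_mul, mul_one]
      rw [hsingle, map_smul, smul_eq_mul]
    have hz : ∀ i, g (Pi.single i (1 : ℚ)) = 0 := by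
      refine Fintype.linearIndependent_iff.mp hv (fun i => g (Pi.single i (1 : ℚ))) ?_
      refine LinearMap.ext fun w => ?_
      have h0 : g ((LinearMap.pi (fun i => B (v i)) : V →ₗ[ℚ] (Fin n → ℚ)) w) = 0 := by
        have h1 := LinearMap.congr_fun hg w
        simpa [LinearMap.dualMap_apply'] using h1
      rw [hc] at h0
      simp only [LinearMap.pi_apply] at h0
      simp only [LinearMap.coe_sum, Finset.sum_apply, LinearMap.smul_apply, smul_eq_mul,
        LinearMap.zero_apply]
      rw [← h0]
      exact Finset.sum_congr rfl fun i _ => mul_comm _ _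
    refine LinearMap.ext fun w => ?_
    rw [hc w]
    simp [hz]
  -- dual family
  have hud : ∀ j : Fin n, ∃ u : V, ∀ i, B (v i) u = if i = j then 1 else 0 := by
    intro j
    obtain ⟨u, huu⟩ := hsurj (fun i => if i = j then 1 else 0)
    exact ⟨u, fun i => congrFun huu i⟩
  choose u hu using hud
  set P : Submodule ℚ (ExteriorAlgebra ℚ V) :=
    ⨆ (S : Finset (Fin n)) (_ : S.card = m),
        Submodule.map
          (ExteriorAlgebra.map (⨅ i ∈ S, LinearMap.ker (B (v i))).subtype).toLinearMap
          (⋀[ℚ]^2 ↥(⨅ i ∈ S, LinearMap.ker (B (v i)))) with hP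
  -- key membership lemma
  have key : ∀ (x y : V) (Tx Ty : Finset (Fin n)), Tx.card ≤ 1 → Ty.card ≤ 1 →
      (∀ i ∉ Tx, B (v i) x = 0) → (∀ i ∉ Ty, B (v i) y = 0) →
      ExteriorAlgebra.ι ℚ x * ExteriorAlgebra.ι ℚ y ∈ P := by
    intro x y Tx Ty hTx hTy hx hy
    have hcard : m ≤ ((Tx ∪ Ty)ᶜ).card := by
      have h1 : (Tx ∪ Ty).card ≤ 2 := le_trans (Finset.card_union_le _ _) (by omega)
      have h2 : ((Tx ∪ Ty)ᶜ).card = n - (Tx ∪ Ty).card := by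
        rw [Finset.card_compl, Fintype.card_fin]
      omega
    obtain ⟨S, hSsub, hScard⟩ := Finset.exists_subset_card_eq hcard
    have hdisj : ∀ i ∈ S, i ∉ Tx ∧ i ∉ Ty := by
      intro i hi
      have := hSsub hi
      rw [Finset.mem_compl, Finset.mem_union] at this
      exact ⟨fun h => this (Or.inl h), fun h => this (Or.inr h)⟩
    have hxW : x ∈ ⨅ i ∈ S, LinearMap.ker (B (v i)) := by
      simp only [Submodule.mem_iInf, LinearMap.mem_ker]
      exact fun i hi => hx i (hdisj i hi).1
    have hyW : y ∈ ⨅ i ∈ S, LinearMap.ker (B (v i)) := by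
      simp only [Submodule.mem_iInf, LinearMap.mem_ker]
      exact fun i hi => hy i (hdisj i hi).2
    rw [hP]
    refine Submodule.mem_iSup_of_mem S (Submodule.mem_iSup_of_mem hScard ?_)
    refine ⟨ExteriorAlgebra.ι ℚ (⟨x, hxW⟩ : ↥(⨅ i ∈ S, LinearMap.ker (B (v i)))) *
        ExteriorAlgebra.ι ℚ (⟨y, hyW⟩ : ↥(⨅ i ∈ S, LinearMap.ker (B (v i)))),
      mul_mem_exteriorPower_two _ _, ?_⟩
    simp [ExteriorAlgebra.map_apply_ι]
  have hk : ∀ (x : V) (j : Fin n), B (v j) (x - ∑ i, (B (v i) x) • u i) = 0 := by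
    intro x j
    simp [hu]
  -- step 1 : decompose the first factor
  have step1 : ∀ (x y : V) (Ty : Finset (Fin n)), Ty.card ≤ 1 →
      (∀ i ∉ Ty, B (v i) y = 0) →
      ExteriorAlgebra.ι ℚ x * ExteriorAlgebra.ι ℚ y ∈ P := by
    intro x y Ty hTy hy
    have hxdec : x = (∑ i, (B (v i) x) • u i) + (x - ∑ i, (B (v i) x) • u i) := by
      abel
    rw [hxdec, map_add, add_mul]
    refine Submodule.add_mem _ ?_ ?_
    · rw [map_sum, Finset.sum_mul]
      refine Submodule.sum_mem _ fun i _ => ?_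
      rw [map_smul, smul_mul_assoc]
      refine Submodule.smul_mem _ _ ?_
      refine key _ _ {i} Ty (by simp) hTy ?_ hy
      intro s hs
      rw [hu]
      simp only [Finset.mem_singleton] at hs
      simp [hs]
    · exact key _ _ ∅ Ty (by simp) hTy (fun i _ => hk x i) hy
  -- step 2 : decompose the second factor
  have step2 : ∀ (x y : V), ExteriorAlgebra.ι ℚ x * ExteriorAlgebra.ι ℚ y ∈ P := by
    intro x y
    have hydec : y = (∑ i, (B (v i) y) • u i) + (y - ∑ i, (B (v i) y) • u i) := by
      abel
    rw [hydec, map_add, mul_add]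
    refine Submodule.add_mem _ ?_ ?_
    · rw [map_sum, Finset.mul_sum]
      refine Submodule.sum_mem _ fun i _ => ?_
      rw [map_smul, mul_smul_comm]
      refine Submodule.smul_mem _ _ ?_
      refine step1 _ _ {i} (by simp) ?_
      intro s hs
      rw [hu]
      simp only [Finset.mem_singleton] at hs
      simp [hs]
    · exact step1 _ _ ∅ (by simp) (fun i _ => hk y i)
  -- conclude
  refine le_antisymm ?_ ?_
  · refine iSup₂_le fun S hS => ?_
    rw [← ExteriorAlgebra.ιMulti_span_fixedDegree, ← ExteriorAlgebra.ιMulti_span_fixedDegree,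
      Submodule.map_span, Submodule.span_le]
    rintro _ ⟨_, ⟨z, rfl⟩, rfl⟩
    refine Submodule.subset_span ⟨fun i => (z i : V), ?_⟩
    simp only [AlgHom.toLinearMap_apply, ExteriorAlgebra.map_apply_ιMulti]
    rfl
  · rw [← ExteriorAlgebra.ιMulti_span_fixedDegree, Submodule.span_le]
    rintro _ ⟨z, rfl⟩
    rw [ιMulti_two']
    exact step2 _ _
end

section
/- Let L be a quasi-unimodular lattice (a finitely generated free abelian group with an alternating ℤ-bilinear form) and let w_1, w_2, w_3, w_4 ∈ L be primitive elements whose images under the adjoint map L → Hom(L,ℤ) are ℚ-linearly independent. Then the natural map ⨁_{i=1}^{4} Λ³(w_i^⊥ ⊗ ℚ) → Λ³(L ⊗ ℚ) is surjective. -/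
open TensorProduct

/-- An element of a (free abelian) lattice is primitive if it is not a multiple `m • w`
with `m ≥ 2` and `w ≠ 0`. -/
def IsPrimitive {L : Type*} [AddCommGroup L] (v : L) : Prop :=
  ¬ ∃ (m : ℤ) (w : L), 2 ≤ m ∧ w ≠ 0 ∧ v = m • w

/-! Since `ℚ` is flat over `ℤ`, `wᵢ^⊥ ⊗ ℚ` is the kernel of the functional `ψᵢ = ⟨wᵢ, ·⟩ ⊗ ℚ`, and
the `ψᵢ` stay linearly independent, so there are vectors `uⱼ` with `ψᵢ uⱼ = δᵢⱼ`. Every `v` splits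
as `(v - ∑ⱼ ψⱼ(v) uⱼ) + ∑ⱼ ψⱼ(v) uⱼ` with the first summand in all the kernels. Expanding
`v₁ ∧ v₂ ∧ v₃` multilinearly along these splittings, each term involves at most three of the four
`uⱼ`, so it is a wedge of vectors in the kernel of the `ψᵢ` whose `uᵢ` is missing. -/

theorem LinearMap.ker_baseChange_eq_baseChange_ker {R A M N : Type*} [CommRing R] [CommRing A]
    [Algebra R A] [Module.Flat R A] [AddCommGroup M] [Module R M] [AddCommGroup N] [Module R N]
    (f : M →ₗ[R] N) : ker (f.baseChange A) = (ker f).baseChange A :=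
  Module.Flat.ker_lTensor_eq A A f

theorem LinearMap.ker_liftBaseChange_algebraLinearMap_comp {R A M : Type*} [CommRing R]
    [CommRing A] [Algebra R A] [Module.Flat R A] [AddCommGroup M] [Module R M]
    (f : M →ₗ[R] R) :
    ker ((Algebra.linearMap R A ∘ₗ f).liftBaseChange A) = (ker f).baseChange A := by
  have : (Algebra.linearMap R A ∘ₗ f).liftBaseChange A =
      (AlgebraTensorModule.rid R A A).toLinearMap ∘ₗ f.baseChange A := by
    ext; simp [Algebra.algebraMap_eq_smul_one]
  rw [this, LinearEquiv.ker_comp, ker_baseChange_eq_baseChange_ker]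

theorem Module.Dual.surjective_pi_of_linearIndependent {K V ι : Type*} [Field K] [AddCommGroup V]
    [Module K V] [Finite ι] {ψ : ι → Module.Dual K V} (hψ : LinearIndependent K ψ) :
    Function.Surjective (LinearMap.pi ψ) := by
  have hfun : LinearIndependent K fun i => ⇑(ψ i) :=
    hψ.map' (LinearMap.ltoFun K V K K) (LinearMap.ker_eq_bot.2 DFunLike.coe_injective)
  have hrange : Set.range (flip fun i => ⇑(ψ i)) = LinearMap.range (LinearMap.pi ψ) := rfl
  rw [← LinearMap.range_eq_top, ← span_flip_eq_top_iff_linearIndependent.2 hfun, hrange,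
    Submodule.span_eq]

namespace ExteriorAlgebra

variable {R M N : Type*} [CommRing R] [AddCommGroup M] [Module R M] [AddCommGroup N] [Module R N]

theorem map_exteriorPower_le (f : M →ₗ[R] N) (n : ℕ) :
    (⋀[R]^n M).map (map f).toLinearMap ≤ ⋀[R]^n N := by
  rw [← ιMulti_span_fixedDegree, Submodule.map_span, Submodule.span_le, ← Set.range_comp]
  rintro _ ⟨v, rfl⟩
  simpa [map_apply_ιMulti] using ιMulti_range R n ⟨f ∘ v, rfl⟩

theorem ιMulti_mem_map_exteriorPower {W : Submodule R M} {n : ℕ} {v : Fin n → M}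
    (hv : ∀ s, v s ∈ W) : ιMulti R n v ∈ (⋀[R]^n W).map (map W.subtype).toLinearMap :=
  ⟨ιMulti R n fun s => ⟨v s, hv s⟩, ιMulti_range R n ⟨_, rfl⟩, map_apply_ιMulti _ _⟩

end ExteriorAlgebra

section DualFamily

open ExteriorAlgebra

variable {R M ι : Type*} [CommRing R] [AddCommGroup M] [Module R M] [Fintype ι] [DecidableEq ι]
  {ψ : ι → Module.Dual R M} {u : ι → M}

theorem exists_forall_ne_some_of_card_lt {n : ℕ} (hn : n < Fintype.card ι)
    (g : Fin n → Option ι) : ∃ i : ι, ∀ s, g s ≠ some i := by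
  by_contra! hg
  choose s hs using hg
  have hinj : Function.Injective s := fun i j hij =>
    Option.some_injective ι (by rw [← hs, ← hs, hij])
  have := Fintype.card_le_of_injective s hinj
  rw [Fintype.card_fin] at this
  omega

theorem apply_sub_sum_smul_eq_zero (hu : ∀ i j, ψ i (u j) = if i = j then 1 else 0) (x : M)
    (i : ι) : ψ i (x - ∑ j, ψ j x • u j) = 0 := by
  simp [hu]

theorem ιMulti_mem_iSup_map_exteriorPower (hu : ∀ i j, ψ i (u j) = if i = j then 1 else 0)
    {W : ι → Submodule R M} (hW : ∀ i, LinearMap.ker (ψ i) ≤ W i) {n : ℕ}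
    (hn : n < Fintype.card ι) (v : Fin n → M) :
    ιMulti R n v ∈ ⨆ i, (⋀[R]^n (W i)).map (map (W i).subtype).toLinearMap := by
  let y : Fin n → Option ι → M := fun s t =>
    t.elim (v s - ∑ j, ψ j (v s) • u j) fun j => ψ j (v s) • u j
  have hv : v = fun s => ∑ t, y s t := by
    funext s
    simp [y, Fintype.sum_option]
  have hexpand : ιMulti R n (fun s => ∑ t, y s t) =
      ∑ g : Fin n → Option ι, ιMulti R n fun s => y s (g s) :=
    (ιMulti R n).toMultilinearMap.map_sum y
  rw [hv, hexpand]
  refine Submodule.sum_mem _ fun g _ => ?_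
  obtain ⟨i, hi⟩ := exists_forall_ne_some_of_card_lt hn g
  refine Submodule.mem_iSup_of_mem i (ιMulti_mem_map_exteriorPower fun s => hW i ?_)
  rw [LinearMap.mem_ker]
  rcases hgs : g s with _ | j
  · exact apply_sub_sum_smul_eq_zero hu (v s) i
  · have hij : i ≠ j := by rintro rfl; exact hi s hgs
    simp [y, hu, hij]

theorem iSup_map_exteriorPower_eq_of_dual_family
    (hu : ∀ i j, ψ i (u j) = if i = j then 1 else 0)
    {W : ι → Submodule R M} (hW : ∀ i, LinearMap.ker (ψ i) ≤ W i) {n : ℕ}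
    (hn : n < Fintype.card ι) :
    ⨆ i, (⋀[R]^n (W i)).map (map (W i).subtype).toLinearMap = ⋀[R]^n M := by
  refine le_antisymm (iSup_le fun i => map_exteriorPower_le _ n) ?_
  rw [← ιMulti_span_fixedDegree, Submodule.span_le]
  rintro _ ⟨v, rfl⟩
  exact ιMulti_mem_iSup_map_exteriorPower hu hW hn v

end DualFamily

theorem Module.Dual.exists_dual_family_of_linearIndependent {K V ι : Type*} [Field K]
    [AddCommGroup V] [Module K V] [Fintype ι] [DecidableEq ι] {ψ : ι → Module.Dual K V}
    (hψ : LinearIndependent K ψ) : ∃ u : ι → V, ∀ i j, ψ i (u j) = if i = j then 1 else 0 := by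
  choose u hu using fun j => surjective_pi_of_linearIndependent hψ (Pi.single j 1)
  exact ⟨u, fun i j => by simpa [Pi.single_apply] using congr_fun (hu j) i⟩

open ExteriorAlgebra in
theorem iSup_map_exteriorPower_eq_of_linearIndependent {K V ι : Type*} [Field K]
    [AddCommGroup V] [Module K V] [Fintype ι] {ψ : ι → Module.Dual K V}
    (hψ : LinearIndependent K ψ) {W : ι → Submodule K V} (hW : ∀ i, LinearMap.ker (ψ i) ≤ W i)
    {n : ℕ} (hn : n < Fintype.card ι) :
    ⨆ i, (⋀[K]^n (W i)).map (map (W i).subtype).toLinearMap = ⋀[K]^n V := by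
  classical
  obtain ⟨u, hu⟩ := Module.Dual.exists_dual_family_of_linearIndependent hψ
  exact iSup_map_exteriorPower_eq_of_dual_family hu hW hn

theorem stmt_3_general (L : Type*) [AddCommGroup L] [Module ℤ L]
    (B : L →ₗ[ℤ] L →ₗ[ℤ] ℤ)
    (w : Fin 4 → L)
    (hind : LinearIndependent ℚ (fun i => (Algebra.linearMap ℤ ℚ) ∘ₗ B (w i))) :
    ⨆ i : Fin 4,
        Submodule.map
          (ExteriorAlgebra.map ((LinearMap.ker (B (w i))).baseChange ℚ).subtype).toLinearMap
          (⋀[ℚ]^3 ↥((LinearMap.ker (B (w i))).baseChange ℚ)) = ⋀[ℚ]^3 (ℚ ⊗[ℤ] L) :=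
  iSup_map_exteriorPower_eq_of_linearIndependent
    (hind.map' _ (LinearMap.liftBaseChangeEquiv ℚ).ker)
    (fun i => (LinearMap.ker_liftBaseChange_algebraLinearMap_comp (B (w i))).le) (by simp)

/-- Let `L` be a quasi-unimodular lattice and `w₁, …, w₄ ∈ L` primitive
elements whose adjoints are `ℚ`-linearly independent.  Then the natural map
`⨁ᵢ Λ³(wᵢ^⊥ ⊗ ℚ) → Λ³(L ⊗ ℚ)` is surjective, i.e. the images of the `Λ³(wᵢ^⊥ ⊗ ℚ)`
span `Λ³(L ⊗ ℚ)`. -/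
theorem stmt_3 (L : Type*) [AddCommGroup L] [Module ℤ L] [Module.Free ℤ L]
    [Module.Finite ℤ L]
    (B : L →ₗ[ℤ] L →ₗ[ℤ] ℤ) (hB : ∀ x, B x x = 0)
    (w : Fin 4 → L) (hw : ∀ i, IsPrimitive (w i))
    (hind : LinearIndependent ℚ (fun i => (Algebra.linearMap ℤ ℚ) ∘ₗ B (w i))) :
    ⨆ i : Fin 4,
        Submodule.map
          (ExteriorAlgebra.map ((LinearMap.ker (B (w i))).baseChange ℚ).subtype).toLinearMap
          (⋀[ℚ]^3 ↥((LinearMap.ker (B (w i))).baseChange ℚ)) = ⋀[ℚ]^3 (ℚ ⊗[ℤ] L) :=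
  stmt_3_general L B w hind
end

section
/- Let L be a quasi-unimodular lattice and let 𝒲 = {w_1,...,w_7} ⊆ L be primitive elements whose images under the adjoint map L → Hom(L,ℤ) are ℚ-linearly independent. Then the natural map ⨁_{𝒲'⊆𝒲, |𝒲'|=4} Λ³((𝒲')^⊥ ⊗ ℚ) → Λ³(L ⊗ ℚ) is surjective. -/
/-!
Over `ℚ` the functionals `φᵢ = B(wᵢ, ·) ⊗ ℚ` are linearly independent, so they admit a dual
family `vⱼ` with `φᵢ(vⱼ) = δᵢⱼ`, and `ℚ ⊗ L` is spanned by the `vⱼ` together with the common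
kernel of all `φᵢ`. A wedge `x₁ ∧ x₂ ∧ x₃` of vectors from this spanning set involves at most
three of the `vⱼ`, so all three vectors are killed by the remaining four `φᵢ`. Finally, the
kernel of `φᵢ` is the base change of the kernel of `B(wᵢ, ·)`, because denominators can be cleared.
-/

open TensorProduct

namespace ExteriorAlgebra

variable {R M N : Type*} [CommRing R] [AddCommGroup M] [Module R M] [AddCommGroup N] [Module R N]

theorem map_exteriorPower_eq_span (f : M →ₗ[R] N) (n : ℕ) :
    (⋀[R]^n M).map (map f).toLinearMap =
      Submodule.span R (Set.range fun m : Fin n → M => ιMulti R n (f ∘ m)) := by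
  rw [← ιMulti_span_fixedDegree, Submodule.map_span, ← Set.range_comp]
  congr 2
  funext m
  exact map_apply_ιMulti f m

theorem ιMulti_mem_map_exteriorPower_subtype {P : Submodule R M} {n : ℕ} {m : Fin n → M}
    (hm : ∀ j, m j ∈ P) :
    ιMulti R n m ∈ (⋀[R]^n P).map (map P.subtype).toLinearMap := by
  rw [map_exteriorPower_eq_span]
  exact Submodule.subset_span ⟨fun j => ⟨m j, hm j⟩, rfl⟩

theorem map_exteriorPower_subtype_mono {P Q : Submodule R M} (h : P ≤ Q) (n : ℕ) :
    (⋀[R]^n P).map (map P.subtype).toLinearMap ≤ (⋀[R]^n Q).map (map Q.subtype).toLinearMap := by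
  rw [map_exteriorPower_eq_span, Submodule.span_le]
  rintro - ⟨m, rfl⟩
  exact ιMulti_mem_map_exteriorPower_subtype fun j => h (m j).2

end ExteriorAlgebra

section DualFamily

variable {ι R K V : Type*} [Fintype ι] [DecidableEq ι]

theorem LinearIndependent.exists_dual_family [Field K] [AddCommGroup V] [Module K V]
    {φ : ι → Module.Dual K V} (hφ : LinearIndependent K φ) :
    ∃ v : ι → V, ∀ i j, φ i (v j) = (Pi.single j 1 : ι → K) i := by
  have hspan : Submodule.span K (Set.range (LinearMap.pi φ)) = ⊤ :=
    span_flip_eq_top_iff_linearIndependent.2 (hφ.map' (LinearMap.ltoFun K V K K)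
      (LinearMap.ker_eq_bot.2 DFunLike.coe_injective))
  have hsurj : Function.Surjective (LinearMap.pi φ) := by
    rwa [← LinearMap.range_eq_top, ← Submodule.span_eq (LinearMap.range _), LinearMap.coe_range]
  choose v hv using fun j => hsurj (Pi.single j 1)
  exact ⟨v, fun i j => congrFun (hv j) i⟩

theorem span_range_union_iInf_ker_eq_top [CommRing R] [AddCommGroup V] [Module R V]
    {φ : ι → Module.Dual R V} {v : ι → V} (hv : ∀ i j, φ i (v j) = (Pi.single j 1 : ι → R) i) :
    Submodule.span R (Set.range v ∪ ↑(⨅ i, LinearMap.ker (φ i))) = ⊤ := by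
  refine eq_top_iff.2 fun x _ => ?_
  have hrest : x - ∑ i, φ i x • v i ∈ ⨅ i, LinearMap.ker (φ i) := by
    simp only [Submodule.mem_iInf, LinearMap.mem_ker, map_sub, map_sum, map_smul, hv,
      smul_eq_mul, Pi.single_apply, mul_ite, mul_one, mul_zero, Finset.sum_ite_eq, Finset.mem_univ,
      if_true, sub_self, implies_true]
  rw [← add_sub_cancel (∑ i, φ i x • v i) x]
  exact Submodule.add_mem _
    (Submodule.sum_mem _ fun i _ => Submodule.smul_mem _ _ (Submodule.subset_span (Or.inl ⟨i, rfl⟩)))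
    (Submodule.subset_span (Or.inr hrest))

end DualFamily

open ExteriorAlgebra in
theorem exteriorPower_le_iSup_map_iInf_ker {ι K V : Type*} [Fintype ι] [DecidableEq ι] [Field K]
    [AddCommGroup V] [Module K V] {φ : ι → Module.Dual K V} (hφ : LinearIndependent K φ)
    {n k : ℕ} (hnk : n + k ≤ Fintype.card ι) :
    ⋀[K]^n V ≤ ⨆ (S : Finset ι) (_ : S.card = k),
      (⋀[K]^n ↥(⨅ i ∈ S, LinearMap.ker (φ i))).map
        (map (⨅ i ∈ S, LinearMap.ker (φ i)).subtype).toLinearMap := by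
  obtain ⟨v, hv⟩ := hφ.exists_dual_family
  rw [← exteriorPower.ιMulti_span_fixedDegree_of_span_eq_top K n V
    (span_range_union_iInf_ker_eq_top hv), Submodule.span_le]
  rintro - ⟨m, hm, rfl⟩
  have hsupp : ∀ j, ∃ i, ∀ i' ≠ i, φ i' (m j) = 0 := by
    intro j
    rcases hm ⟨j, rfl⟩ with ⟨i, hi⟩ | hK
    · exact ⟨i, fun i' hi' => by rw [← hi, hv, Pi.single_eq_of_ne hi']⟩
    · have : Nonempty ι := Fintype.card_pos_iff.1 (by have := j.pos; omega)
      exact ⟨Classical.arbitrary ι, fun i' _ => (Submodule.mem_iInf _).1 hK i'⟩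
  choose t ht using hsupp
  obtain ⟨S, hS, hScard⟩ : ∃ S ⊆ (Finset.univ.image t)ᶜ, S.card = k := by
    have hcard : (Finset.univ.image t).card ≤ n := Finset.card_image_le.trans (by simp)
    refine Finset.exists_subset_card_eq ?_
    rw [Finset.card_compl]
    omega
  refine Submodule.mem_iSup_of_mem S (Submodule.mem_iSup_of_mem hScard ?_)
  refine ιMulti_mem_map_exteriorPower_subtype fun j => ?_
  simp only [Submodule.mem_iInf, LinearMap.mem_ker]
  intro i hi
  exact ht j i fun h => Finset.mem_compl.1 (hS hi) (h ▸ Finset.mem_image_of_mem t (Finset.mem_univ j))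

theorem Submodule.iInf_ker_liftBaseChange_le_baseChange {ι R K L : Type*} [CommRing R]
    [Field K] [Algebra R K] [IsFractionRing R K] [AddCommGroup L] [Module R L]
    (f : ι → L →ₗ[R] R) (S : Finset ι) :
    ⨅ i ∈ S, LinearMap.ker (((Algebra.linearMap R K) ∘ₗ f i).liftBaseChange K) ≤
      (⨅ i ∈ S, LinearMap.ker (f i)).baseChange K := by
  intro x hx
  -- `K ⊗ L` is a localization of `L`, so `s • x = 1 ⊗ y` for some `s ≠ 0` and `y : L`
  obtain ⟨⟨y, s⟩, hys⟩ := IsLocalizedModule.surj (nonZeroDivisors R) (TensorProduct.mk R K L 1) x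
  simp only [Submodule.mem_iInf, LinearMap.mem_ker] at hx
  have hy : y ∈ ⨅ i ∈ S, LinearMap.ker (f i) := by
    simp only [Submodule.mem_iInf, LinearMap.mem_ker]
    intro i hi
    apply IsFractionRing.injective R K
    have := congrArg (((Algebra.linearMap R K) ∘ₗ f i).liftBaseChange K) hys
    simpa [hx i hi] using this.symm
  have hs : algebraMap R K s ≠ 0 := (IsLocalization.map_units K s).ne_zero
  rw [← Submodule.smul_mem_iff _ hs, algebraMap_smul, ← Submonoid.smul_def, hys]
  exact Submodule.tmul_mem_baseChange_of_mem 1 hy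

theorem stmt_4_general (L : Type*) [AddCommGroup L] [Module ℤ L]
    (B : L →ₗ[ℤ] L →ₗ[ℤ] ℤ)
    (w : Fin 7 → L)
    (hind : LinearIndependent ℚ (fun i => (Algebra.linearMap ℤ ℚ) ∘ₗ B (w i))) :
    ⨆ (S : Finset (Fin 7)) (_ : S.card = 4),
        Submodule.map
          (ExteriorAlgebra.map
            ((⨅ i ∈ S, LinearMap.ker (B (w i))).baseChange ℚ).subtype).toLinearMap
          (⋀[ℚ]^3 ↥((⨅ i ∈ S, LinearMap.ker (B (w i))).baseChange ℚ)) =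
      ⋀[ℚ]^3 (ℚ ⊗[ℤ] L) := by
  have hφ : LinearIndependent ℚ fun i => ((Algebra.linearMap ℤ ℚ) ∘ₗ B (w i)).liftBaseChange ℚ :=
    hind.map' (LinearMap.liftBaseChangeEquiv ℚ).toLinearMap (LinearEquiv.ker _)
  refine le_antisymm (iSup₂_le fun S _ => ExteriorAlgebra.map_exteriorPower_le _ 3) ?_
  refine (exteriorPower_le_iSup_map_iInf_ker hφ (k := 4) (by simp)).trans ?_
  exact iSup₂_mono fun S _ => ExteriorAlgebra.map_exteriorPower_subtype_mono
    (Submodule.iInf_ker_liftBaseChange_le_baseChange (fun i => B (w i)) S) 3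

/-- Let `L` be a quasi-unimodular lattice and `𝒲 = {w₁, …, w₇} ⊆ L`
primitive elements whose adjoints are `ℚ`-linearly independent.  Then the natural map
`⨁_{𝒲' ⊆ 𝒲, |𝒲'| = 4} Λ³((𝒲')^⊥ ⊗ ℚ) → Λ³(L ⊗ ℚ)` is surjective, i.e. the images of the
subspaces `Λ³((𝒲')^⊥ ⊗ ℚ)` over all 4-element subsets `𝒲'` span `Λ³(L ⊗ ℚ)`. -/
theorem stmt_4 (L : Type*) [AddCommGroup L] [Module ℤ L] [Module.Free ℤ L]
    [Module.Finite ℤ L]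
    (B : L →ₗ[ℤ] L →ₗ[ℤ] ℤ) (hB : ∀ x, B x x = 0)
    (w : Fin 7 → L) (hw : ∀ i, IsPrimitive (w i))
    (hind : LinearIndependent ℚ (fun i => (Algebra.linearMap ℤ ℚ) ∘ₗ B (w i))) :
    ⨆ (S : Finset (Fin 7)) (_ : S.card = 4),
        Submodule.map
          (ExteriorAlgebra.map
            ((⨅ i ∈ S, LinearMap.ker (B (w i))).baseChange ℚ).subtype).toLinearMap
          (⋀[ℚ]^3 ↥((⨅ i ∈ S, LinearMap.ker (B (w i))).baseChange ℚ)) =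
      ⋀[ℚ]^3 (ℚ ⊗[ℤ] L) :=
  stmt_4_general L B w hind
end

section
/- Let L be a quasi-unimodular lattice whose genus is at least 1, i.e., L contains two elements γ, δ with ⟨γ,δ⟩ = 1. Then the abelian group Λ²L is spanned by elements of the form γ ∧ δ where γ, δ ∈ L are primitive and ⟨γ,δ⟩ = 1. -/
theorem IsPrimitive.of_apply_eq_one {L : Type*} [AddCommGroup L] [Module ℤ L]
    (φ : L →ₗ[ℤ] ℤ) {v : L} (h : φ v = 1) : IsPrimitive v := by
  rintro ⟨m, w, hm, -, rfl⟩
  have : m ∣ 1 := ⟨φ w, by simpa using h.symm⟩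
  have := Int.le_of_dvd one_pos this
  omega

namespace ExteriorAlgebra

variable {R M : Type*} [CommRing R] [AddCommGroup M] [Module R M]

theorem exteriorPower_two_le_iff {S : Submodule R (ExteriorAlgebra R M)} :
    ⋀[R]^2 M ≤ S ↔ ∀ u v : M, ι R u * ι R v ∈ S := by
  simp [exteriorPower, pow_two, Submodule.mul_le]

theorem ι_mul_ι_mem_exteriorPower_two (u v : M) : ι R u * ι R v ∈ ⋀[R]^2 M :=
  exteriorPower_two_le_iff.mp le_rfl u v

variable (B : M →ₗ[R] M →ₗ[R] R)

theorem ι_mul_ι_mem_span_of_apply_right_eq_one {u f : M} (hu : B u f = 1) (v : M) :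
    ι R u * ι R v ∈ Submodule.span R {x | ∃ γ δ : M, B γ δ = 1 ∧ x = ι R γ * ι R δ} := by
  have hv : B u (v - (B u v - 1) • f) = 1 := by simp [hu]
  have hsplit : ι R u * ι R v =
      ι R u * ι R (v - (B u v - 1) • f) + (B u v - 1) • (ι R u * ι R f) := by
    simp only [map_sub, map_smul, mul_sub, mul_smul_comm]
    abel
  rw [hsplit]
  exact Submodule.add_mem _ (Submodule.subset_span ⟨u, _, hv, rfl⟩)
    (Submodule.smul_mem _ _ (Submodule.subset_span ⟨u, f, hu, rfl⟩))

theorem ι_mul_ι_mem_span_of_apply_eq_one {e f : M} (hef : B e f = 1) (u v : M) :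
    ι R u * ι R v ∈ Submodule.span R {x | ∃ γ δ : M, B γ δ = 1 ∧ x = ι R γ * ι R δ} := by
  have hu : B (u + (1 - B u f) • e) f = 1 := by simp [hef]
  have hsplit : ι R u * ι R v =
      ι R (u + (1 - B u f) • e) * ι R v - (1 - B u f) • (ι R e * ι R v) := by
    simp only [map_add, map_smul, add_mul, smul_mul_assoc]
    abel
  rw [hsplit]
  exact Submodule.sub_mem _ (ι_mul_ι_mem_span_of_apply_right_eq_one B hu v)
    (Submodule.smul_mem _ _ (ι_mul_ι_mem_span_of_apply_right_eq_one B hef v))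

theorem span_ι_mul_ι_of_apply_eq_one_eq_exteriorPower_two (h : ∃ e f : M, B e f = 1) :
    Submodule.span R {x | ∃ γ δ : M, B γ δ = 1 ∧ x = ι R γ * ι R δ} = ⋀[R]^2 M := by
  obtain ⟨e, f, hef⟩ := h
  refine le_antisymm (Submodule.span_le.mpr ?_) (exteriorPower_two_le_iff.mpr
    (ι_mul_ι_mem_span_of_apply_eq_one B hef))
  rintro _ ⟨γ, δ, -, rfl⟩
  exact ι_mul_ι_mem_exteriorPower_two γ δ

end ExteriorAlgebra

theorem stmt_5_general (L : Type*) [AddCommGroup L] [Module ℤ L]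
    (B : L →ₗ[ℤ] L →ₗ[ℤ] ℤ)
    (hgenus : ∃ γ δ : L, B γ δ = 1) :
    Submodule.span ℤ {x : ExteriorAlgebra ℤ L | ∃ γ δ : L, IsPrimitive γ ∧ IsPrimitive δ ∧
        B γ δ = 1 ∧ x = ExteriorAlgebra.ι ℤ γ * ExteriorAlgebra.ι ℤ δ} =
      ⋀[ℤ]^2 L := by
  rw [← ExteriorAlgebra.span_ι_mul_ι_of_apply_eq_one_eq_exteriorPower_two B hgenus]
  congr 2
  ext x
  constructor
  · rintro ⟨γ, δ, -, -, h, rfl⟩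
    exact ⟨γ, δ, h, rfl⟩
  · rintro ⟨γ, δ, h, rfl⟩
    exact ⟨γ, δ, .of_apply_eq_one (B.flip δ) h, .of_apply_eq_one (B γ) h, h, rfl⟩

/-- If `L` is a quasi-unimodular lattice of genus at least one (i.e. there
are `γ, δ ∈ L` with `⟨γ, δ⟩ = 1`), then `Λ²L` is spanned over `ℤ` by the elements `γ ∧ δ`
with `γ, δ` primitive and `⟨γ, δ⟩ = 1`. -/
theorem stmt_5 (L : Type*) [AddCommGroup L] [Module ℤ L] [Module.Free ℤ L]
    [Module.Finite ℤ L]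
    (B : L →ₗ[ℤ] L →ₗ[ℤ] ℤ) (hB : ∀ x, B x x = 0)
    (hgenus : ∃ γ δ : L, B γ δ = 1) :
    Submodule.span ℤ {x : ExteriorAlgebra ℤ L | ∃ γ δ : L, IsPrimitive γ ∧ IsPrimitive δ ∧
        B γ δ = 1 ∧ x = ExteriorAlgebra.ι ℤ γ * ExteriorAlgebra.ι ℤ δ} =
      ⋀[ℤ]^2 L :=
  stmt_5_general L B hgenus
end

section
/- Let R be a commutative unital Noetherian ring, G a group generated by a finite set 𝓗 all of whose elements are conjugate in G to a fixed element f ∈ G, and V an R-module with a linear G-action. Suppose that (i) V/V^f is finitely generated as an R-module, where V^f is the submodule fixed by f, and (ii) the coinvariants H_0(G; V) = V/⟨gv − v⟩ are finitely generated as an R-module. Then V is finitely generated as an R-module. -/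
/-- Let `R` be a commutative unital Noetherian ring, `G` a group generated
by a finite set `𝓗` all of whose elements are conjugate to a fixed `f ∈ G`, acting
`R`-linearly on an `R`-module `V` (via `ρ`).  If `V/V^f` and the coinvariants `H₀(G; V)`
are finitely generated `R`-modules, then so is `V`. -/
theorem stmt_7 (R : Type*) [CommRing R] [IsNoetherianRing R]
    (G : Type*) [Group G] (V : Type*) [AddCommGroup V] [Module R V]
    (ρ : G →* (V →ₗ[R] V))
    (𝓗 : Finset G) (hgen : Subgroup.closure (𝓗 : Set G) = ⊤)
    (f : G) (hconj : ∀ h ∈ 𝓗, IsConj f h)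
    (hVf : Module.Finite R (V ⧸ LinearMap.ker (ρ f - LinearMap.id)))
    (hco : Module.Finite R (V ⧸ Submodule.span R {x : V | ∃ (g : G) (v : V), x = ρ g v - v})) :
    Module.Finite R V := by
  set W : Submodule R V := Submodule.span R {x : V | ∃ (g : G) (v : V), x = ρ g v - v} with hW
  -- the range of ρ f - id is finitely generated
  have hrf : (LinearMap.range (ρ f - LinearMap.id (R := R) (M := V))).FG := by
    have e := ((ρ f - LinearMap.id (R := R) (M := V)).quotKerEquivRange)
    have : Module.Finite R (LinearMap.range (ρ f - LinearMap.id (R := R) (M := V))) :=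
      Module.Finite.equiv e
    exact (Module.Finite.iff_fg (N := LinearMap.range (ρ f - LinearMap.id (R := R) (M := V)))).mp this
  -- ranges for conjugates are fg
  have hrange : ∀ h ∈ 𝓗, (LinearMap.range (ρ h - LinearMap.id (R := R) (M := V))).FG := by
    intro h hh
    obtain ⟨c, hc⟩ := isConj_iff.mp (hconj h hh)
    have key1 : ∀ w : V, ρ c (ρ c⁻¹ w) = w := fun w => by
      rw [← Module.End.mul_apply, ← map_mul, mul_inv_cancel, map_one, Module.End.one_apply]
    have key2 : ∀ w : V, ρ c⁻¹ (ρ c w) = w := fun w => by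
      rw [← Module.End.mul_apply, ← map_mul, inv_mul_cancel, map_one, Module.End.one_apply]
    have hconj' : ρ h - LinearMap.id =
        (ρ c) ∘ₗ (ρ f - LinearMap.id) ∘ₗ (ρ c⁻¹) := by
      ext v
      simp [← hc, map_mul, Module.End.mul_apply, key1]
    rw [hconj', LinearMap.range_comp, LinearMap.range_comp,
      LinearMap.range_eq_top.mpr (fun v => ⟨ρ c v, key2 v⟩),
      Submodule.map_top]
    exact hrf.map _
  -- W equals the finite sup of ranges
  have hWN : W = ⨆ h ∈ 𝓗, LinearMap.range (ρ h - LinearMap.id (R := R) (M := V)) := by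
    apply le_antisymm
    · rw [hW, Submodule.span_le]
      rintro x ⟨g, v, rfl⟩
      have key : ∀ g : G, ∀ v : V,
          ρ g v - v ∈ ⨆ h ∈ 𝓗, LinearMap.range (ρ h - LinearMap.id (R := R) (M := V)) := by
        intro g
        have hg : g ∈ Subgroup.closure (𝓗 : Set G) := by rw [hgen]; trivial
        induction hg using Subgroup.closure_induction with
        | mem h hh =>
          intro v
          exact Submodule.mem_iSup_of_mem h (Submodule.mem_iSup_of_mem hh ⟨v, by simp⟩)
        | one => intro v; simp
        | mul a b _ _ ha hb =>
          intro v
          have : ρ (a * b) v - v = (ρ a (ρ b v) - ρ b v) + (ρ b v - v) := by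
            simp [map_mul]
          rw [this]
          exact add_mem (ha _) (hb _)
        | inv a _ ha =>
          intro v
          have : ρ a⁻¹ v - v = -(ρ a (ρ a⁻¹ v) - ρ a⁻¹ v) := by
            simp [← Module.End.mul_apply, ← map_mul]
          rw [this]
          exact neg_mem (ha _)
      exact key g v
    · apply iSup_le; intro h; apply iSup_le; intro hh
      rintro x ⟨v, rfl⟩
      exact Submodule.subset_span ⟨h, v, by simp⟩
  have hWfg : W.FG := by
    rw [hWN]
    exact Submodule.fg_biSup 𝓗 _ hrange
  -- conclude via the quotient
  rw [Module.finite_def]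
  apply Submodule.fg_of_fg_map_of_fg_inf_ker W.mkQ
  · rw [Submodule.map_top, Submodule.range_mkQ]
    exact Module.finite_def.mp hco
  · rw [Submodule.ker_mkQ, top_inf_eq]
    exact hWfg
end

section
/- Let G be a group, V a ℚ-vector space with a linear G-action, and suppose V sits in a short exact sequence of G-modules 0 → K → V → W → 0 where K is a trivial G-module and W is finite-dimensional. If G is finitely generated and the coinvariants H_0(G;V) are finite-dimensional, then V is finite-dimensional. -/
/-- Let `G` be a finitely generated group acting `ℚ`-linearly (via `ρ`) on a
`ℚ`-vector space `V`, and let `K ⊆ V` be a `G`-submodule on which `G` acts trivially with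
`W = V/K` finite-dimensional (so `0 → K → V → W → 0` is a short exact sequence of
`G`-modules with `K` trivial).  If the coinvariants `H₀(G; V)` are finite-dimensional, then
`V` is finite-dimensional. -/
theorem stmt_8 (G : Type*) [Group G] (hG : Group.FG G)
    (V : Type*) [AddCommGroup V] [Module ℚ V] (ρ : G →* (V →ₗ[ℚ] V))
    (K : Submodule ℚ V) (hK : ∀ (g : G), ∀ v ∈ K, ρ g v = v)
    (hW : FiniteDimensional ℚ (V ⧸ K))
    (hco : FiniteDimensional ℚ
      (V ⧸ Submodule.span ℚ {x : V | ∃ (g : G) (v : V), x = ρ g v - v})) :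
    FiniteDimensional ℚ V := by
  obtain ⟨S, hS⟩ := hG.out
  set A : Submodule ℚ V :=
    Submodule.span ℚ {x : V | ∃ (g : G) (v : V), x = ρ g v - v} with hA
  -- the submodule generated by the ranges of `ρ s - 1` for `s` in the finite generating set
  set M : Submodule ℚ V := ⨆ s : S, LinearMap.range (ρ (s : G) - LinearMap.id) with hM
  -- each such range is finite-dimensional since `ρ s - 1` kills `K`
  have hMfin : FiniteDimensional ℚ M := by
    have : ∀ s : S, FiniteDimensional ℚ (LinearMap.range (ρ (s : G) - LinearMap.id)) := by
      intro s
      have hker : K ≤ LinearMap.ker (ρ (s : G) - LinearMap.id) := by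
        intro v hv
        simp [LinearMap.mem_ker, LinearMap.sub_apply, hK (s : G) v hv]
      rw [← Submodule.range_liftQ _ _ hker]
      exact LinearMap.finiteDimensional_range _
    exact Submodule.finiteDimensional_iSup _
  -- `A ≤ M` : for every `g ∈ G = closure S` and `v`, `ρ g v - v ∈ M`
  have key : ∀ g : G, ∀ v : V, ρ g v - v ∈ M := by
    intro g
    have hg : g ∈ Subgroup.closure (S : Set G) := hS ▸ Subgroup.mem_top g
    induction hg using Subgroup.closure_induction with
    | mem s hs =>
        intro v
        have : ρ s v - v ∈ LinearMap.range (ρ s - LinearMap.id) :=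
          ⟨v, by simp [LinearMap.sub_apply]⟩
        exact Submodule.mem_iSup_of_mem ⟨s, hs⟩ this
    | one => intro v; simp
    | mul x y _ _ hx hy =>
        intro v
        have : ρ (x * y) v - v = (ρ x (ρ y v) - ρ y v) + (ρ y v - v) := by
          simp [map_mul]
        rw [this]
        exact M.add_mem (hx _) (hy _)
    | inv x _ hx =>
        intro v
        have : ρ x⁻¹ v - v = -(ρ x (ρ x⁻¹ v) - ρ x⁻¹ v) := by
          have h : ρ x (ρ x⁻¹ v) = v := by
            rw [← LinearMap.comp_apply, ← Module.End.mul_eq_comp, ← map_mul]; simp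
          rw [h]; abel
        rw [this]
        exact M.neg_mem (hx _)
  have hAM : A ≤ M := by
    rw [hA, Submodule.span_le]
    rintro x ⟨g, v, rfl⟩
    exact key g v
  -- hence `V ⧸ M` is finite-dimensional, being a quotient of `V ⧸ A`
  have hQ : FiniteDimensional ℚ (V ⧸ M) := by
    have hk : A ≤ LinearMap.ker M.mkQ := by rwa [Submodule.ker_mkQ]
    have hsurj : Function.Surjective (A.liftQ M.mkQ hk) := by
      intro x
      obtain ⟨v, rfl⟩ := M.mkQ_surjective x
      exact ⟨A.mkQ v, by simp⟩
    exact Module.Finite.of_surjective _ hsurj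
  -- conclude: `M` and `V ⧸ M` finite-dimensional imply `V` finite-dimensional
  have h1 : IsNoetherian ℚ M := inferInstance
  have h2 : IsNoetherian ℚ (V ⧸ M) := inferInstance
  have : IsNoetherian ℚ V := (isNoetherian_iff_submodule_quotient M).mpr ⟨h1, h2⟩
  exact IsNoetherian.iff_fg.mp this
end
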